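/- arXiv:2011.13846 — 6 statements merged into one kernel-verified Lean document; each statement's English description precedes it below -/
import Mathlib

section
/- Under the assumptions u0b > u1b and u1g > u0g, if u0b < u1g (action 1 has the strictly highest payoff), then μ^W(ρ) = (exp(ρu0b) − exp(ρu1b))/(exp(ρu0b) − exp(ρu1b) + exp(ρu1g) − exp(ρu0g)) tends to 0 as ρ → ∞. -/
open Real Filter

lemma exp_ratio_tendsto (a b : ℝ) (h : a < b) :
    Tendsto (fun ρ : ℝ => Real.exp (ρ * a) / Real.exp (ρ * b)) atTop (nhds 0) := by
  have : (fun ρ : ℝ => Real.exp (ρ * a) / Real.exp (ρ * b))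
      = fun ρ : ℝ => Real.exp (ρ * (a - b)) := by
    funext ρ; rw [← Real.exp_sub]; ring_nf
  rw [this]
  apply Real.tendsto_exp_atBot.comp
  have hneg : a - b < 0 := by linarith
  exact tendsto_id.atTop_mul_const_of_neg hneg

theorem stmt5 (u0b u0g u1b u1g : ℝ) (hb : u1b < u0b) (hg : u0g < u1g)
    (hmax : u0b < u1g) :
    Tendsto
      (fun ρ : ℝ =>
        (Real.exp (ρ * u0b) - Real.exp (ρ * u1b)) /
          (Real.exp (ρ * u0b) - Real.exp (ρ * u1b) +
            (Real.exp (ρ * u1g) - Real.exp (ρ * u0g))))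
      atTop (nhds 0) := by
  have h1b : u1b < u1g := by linarith
  have h0g : u0g < u1g := hg
  have hN : Tendsto (fun ρ : ℝ =>
      (Real.exp (ρ * u0b) - Real.exp (ρ * u1b)) / Real.exp (ρ * u1g)) atTop (nhds 0) := by
    have := (exp_ratio_tendsto u0b u1g hmax).sub (exp_ratio_tendsto u1b u1g h1b)
    simpa [sub_div] using this
  have hD : Tendsto (fun ρ : ℝ =>
      (Real.exp (ρ * u0b) - Real.exp (ρ * u1b) +
        (Real.exp (ρ * u1g) - Real.exp (ρ * u0g))) / Real.exp (ρ * u1g)) atTop (nhds 1) := by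
    have h2 := hN.add (((tendsto_const_nhds (x := (1:ℝ)) (f := atTop)).sub
      (exp_ratio_tendsto u0g u1g h0g)))
    have heq : ∀ ρ : ℝ, (Real.exp (ρ * u0b) - Real.exp (ρ * u1b) +
        (Real.exp (ρ * u1g) - Real.exp (ρ * u0g))) / Real.exp (ρ * u1g)
        = (Real.exp (ρ * u0b) - Real.exp (ρ * u1b)) / Real.exp (ρ * u1g)
          + (1 - Real.exp (ρ * u0g) / Real.exp (ρ * u1g)) := by
      intro ρ
      rw [add_div, sub_div, sub_div, div_self (Real.exp_ne_zero _)]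
    refine Tendsto.congr (fun ρ => (heq ρ).symm) ?_
    simpa using h2
  have := hN.div hD one_ne_zero
  have heq : ∀ ρ : ℝ,
      ((Real.exp (ρ * u0b) - Real.exp (ρ * u1b)) / Real.exp (ρ * u1g)) /
        ((Real.exp (ρ * u0b) - Real.exp (ρ * u1b) +
          (Real.exp (ρ * u1g) - Real.exp (ρ * u0g))) / Real.exp (ρ * u1g))
      = (Real.exp (ρ * u0b) - Real.exp (ρ * u1b)) /
          (Real.exp (ρ * u0b) - Real.exp (ρ * u1b) +
            (Real.exp (ρ * u1g) - Real.exp (ρ * u0g))) := by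
    intro ρ
    rw [div_div_div_cancel_right₀ (Real.exp_ne_zero _)]
  have := Tendsto.congr heq this
  simpa using this
end

section
/- The function f(x) = x²/(cosh(ρx) − 1) is strictly decreasing on (0, ∞) for every fixed ρ > 0. -/
/-! Since `cosh x - 1 = 2 sinh² (x / 2)`, the function is `(2 / ρ²) (t / sinh t)²` with `t = ρ x / 2`,
and `sinh t / t` is strictly increasing on `(0, ∞)`: it is the slope of the secant from `0` of
`sinh`, which is strictly convex on `[0, ∞)`. -/

open Real Set

theorem Real.strictConvexOn_sinh : StrictConvexOn ℝ (Ici 0) sinh :=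
  strictConvexOn_of_deriv2_pos (convex_Ici 0) continuous_sinh.continuousOn fun x hx => by
    rw [interior_Ici, mem_Ioi] at hx
    simpa [Real.deriv_sinh, Real.deriv_cosh] using hx

theorem Real.strictMonoOn_sinh_div_self : StrictMonoOn (fun t => sinh t / t) (Ioi 0) :=
  fun x hx y hy hxy => by
    simpa using strictConvexOn_sinh.secant_strict_mono (a := 0) self_mem_Ici
      (mem_Ici_of_Ioi hx) (mem_Ici_of_Ioi hy) hx.ne' hy.ne' hxy

theorem Real.cosh_sub_one_eq (x : ℝ) : cosh x - 1 = 2 * sinh (x / 2) ^ 2 := by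
  have h := cosh_two_mul (x / 2)
  rw [mul_div_cancel₀ x two_ne_zero, cosh_sq] at h
  linarith

theorem Real.sq_div_cosh_sub_one_eq (x : ℝ) :
    x ^ 2 / (cosh x - 1) = 2 * (sinh (x / 2) / (x / 2))⁻¹ ^ 2 := by
  rw [cosh_sub_one_eq]
  field_simp

theorem Real.strictAntiOn_sq_div_cosh_sub_one :
    StrictAntiOn (fun x => x ^ 2 / (cosh x - 1)) (Ioi 0) := fun x hx y hy hxy => by
  have hx2 : 0 < x / 2 := half_pos hx
  have hy2 : 0 < y / 2 := half_pos hy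
  have hslope : sinh (x / 2) / (x / 2) < sinh (y / 2) / (y / 2) :=
    strictMonoOn_sinh_div_self hx2 hy2 (by linarith)
  have hpos : 0 < sinh (x / 2) / (x / 2) := div_pos (sinh_pos_iff.2 hx2) hx2
  simp only [sq_div_cosh_sub_one_eq]
  gcongr

theorem stmt10 (ρ : ℝ) (hρ : 0 < ρ) :
    StrictAntiOn (fun x : ℝ => x ^ 2 / (Real.cosh (ρ * x) - 1)) (Set.Ioi 0) := by
  intro x hx y hy hxy
  have hscaled (z : ℝ) :
      z ^ 2 / (cosh (ρ * z) - 1) = (ρ * z) ^ 2 / (cosh (ρ * z) - 1) / ρ ^ 2 := by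
    field_simp
  simp only [hscaled]
  gcongr ?_ / _
  exact strictAntiOn_sq_div_cosh_sub_one (mul_pos hρ hx) (mul_pos hρ hy)
    (mul_lt_mul_of_pos_left hxy hρ)
end

section
/- Define α(ρ) as in the wishful-thinking model with u0b > u1b and u1g > u0g. Then lim_{ρ→0⁺} α(ρ) = ((u0b − u0g) − (u1g − u1b))/2 and lim_{ρ→∞} α(ρ) = u0b − u1g. -/
open Real Filter

private lemma expB : Tendsto (fun t : ℝ => (Real.exp t - 1) / t) (nhdsWithin 0 {(0:ℝ)}ᶜ) (nhds 1) := by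
  have h := (Real.hasDerivAt_exp 0)
  rw [hasDerivAt_iff_tendsto_slope] at h
  simpa [slope_fun_def, Real.exp_zero, div_eq_inv_mul] using h

private lemma expB' : Tendsto (fun t : ℝ => (Real.exp t - 1) / t) (nhdsWithin 0 (Set.Ioi 0)) (nhds 1) :=
  expB.mono_left (nhdsWithin_mono _ (fun x hx => ne_of_gt hx))

private lemma expC : Tendsto (fun t : ℝ => (Real.exp t - 1 - t) / t ^ 2) (nhdsWithin 0 (Set.Ioi 0)) (nhds (1/2)) := by
  apply HasDerivAt.lhopital_zero_nhdsGT
    (f' := fun t => Real.exp t - 1) (g' := fun t => 2 * t)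
  · filter_upwards with t
    exact ((Real.hasDerivAt_exp t).sub_const 1).sub (hasDerivAt_id t)
  · filter_upwards with t
    simpa using (hasDerivAt_pow 2 t)
  · filter_upwards [self_mem_nhdsWithin] with t (ht : t ∈ Set.Ioi 0)
    have ht' : (0:ℝ) < t := ht
    positivity
  · have : Tendsto (fun t : ℝ => Real.exp t - 1 - t) (nhdsWithin 0 (Set.Ioi 0)) (nhds (Real.exp 0 - 1 - 0)) :=
      (((Real.continuous_exp.sub continuous_const).sub continuous_id).continuousAt).continuousWithinAt.tendsto
    simpa using this
  · have : Tendsto (fun t : ℝ => t ^ 2) (nhdsWithin 0 (Set.Ioi 0)) (nhds ((0:ℝ) ^ 2)) :=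
      ((continuous_pow 2).continuousAt).continuousWithinAt.tendsto
    simpa using this
  · have h2 : Tendsto (fun t : ℝ => ((Real.exp t - 1) / t) * (1/2)) (nhdsWithin 0 (Set.Ioi 0)) (nhds (1 * (1/2))) :=
      expB'.mul_const _
    rw [show (1:ℝ)/2 = 1*(1/2) by norm_num]
    refine Tendsto.congr' ?_ h2
    filter_upwards [self_mem_nhdsWithin] with t (ht : t ∈ Set.Ioi 0)
    rw [div_mul_div_comm, mul_one, mul_comm]

private noncomputable def qq (t : ℝ) : ℝ := (t + 1 - Real.exp t) / (t * (Real.exp t - 1))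

private lemma expD : Tendsto (fun t : ℝ => t / (Real.exp t - 1)) (nhdsWithin 0 (Set.Ioi 0)) (nhds 1) := by
  have h := expB'.inv₀ (by norm_num)
  simpa [one_div] using h.congr (fun t => by rw [inv_div])

private lemma hQ : Tendsto qq (nhdsWithin 0 (Set.Ioi 0)) (nhds (-(1/2))) := by
  have h : Tendsto (fun t : ℝ => -((Real.exp t - 1 - t) / t ^ 2) * (t / (Real.exp t - 1)))
      (nhdsWithin 0 (Set.Ioi 0)) (nhds (-(1/2) * 1)) := expC.neg.mul expD
  rw [show -(1/2 : ℝ) = -(1/2) * 1 by ring]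
  refine Tendsto.congr' ?_ h
  filter_upwards [self_mem_nhdsWithin] with t (ht : t ∈ Set.Ioi 0)
  have ht0 : (t:ℝ) ≠ 0 := ne_of_gt ht
  have he : Real.exp t - 1 ≠ 0 := by
    have : (1:ℝ) < Real.exp t := by
      rw [show (1:ℝ) = Real.exp 0 by simp]; exact Real.exp_lt_exp.2 ht
    linarith
  unfold qq
  field_simp
  ring

private lemma ratio_eq (a b ρ : ℝ) (hab : b < a) (hρ : 0 < ρ) :
    (a * Real.exp (ρ*a) - b * Real.exp (ρ*b)) / (Real.exp (ρ*a) - Real.exp (ρ*b))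
      = a + (a - b) / (Real.exp (ρ*(a-b)) - 1) := by
  have h2 : Real.exp (ρ*b) < Real.exp (ρ*a) := Real.exp_lt_exp.2 (by nlinarith)
  have hne : Real.exp (ρ*a) - Real.exp (ρ*b) ≠ 0 := sub_ne_zero.2 (ne_of_gt h2)
  have h4 : Real.exp (ρ*(a-b)) = Real.exp (ρ*a) / Real.exp (ρ*b) := by
    rw [show ρ*(a-b) = ρ*a - ρ*b by ring, Real.exp_sub]
  have hb0 : Real.exp (ρ*b) ≠ 0 := (Real.exp_pos _).ne'
  have h5 : Real.exp (ρ*(a-b)) - 1 ≠ 0 := by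
    have : (1:ℝ) < Real.exp (ρ*(a-b)) := by
      rw [show (1:ℝ) = Real.exp 0 by simp]; exact Real.exp_lt_exp.2 (by nlinarith)
    linarith
  rw [h4] at h5 ⊢
  rw [div_sub_one hb0, div_div_eq_mul_div, div_eq_iff hne, add_mul, div_mul_cancel₀ _ hne]
  ring

private lemma qq_eq (x ρ : ℝ) (hx : 0 < x) (hρ : 0 < ρ) :
    x / (Real.exp (ρ*x) - 1) = x * qq (ρ*x) + 1/ρ := by
  have hρx : 0 < ρ*x := by positivity
  have he : Real.exp (ρ*x) - 1 ≠ 0 := by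
    have : (1:ℝ) < Real.exp (ρ*x) := by
      rw [show (1:ℝ) = Real.exp 0 by simp]; exact Real.exp_lt_exp.2 hρx
    linarith
  unfold qq
  rw [mul_div_assoc', div_add_div _ _ (mul_ne_zero hρx.ne' he) hρ.ne', div_eq_div_iff he (mul_ne_zero (mul_ne_zero hρx.ne' he) hρ.ne')]
  ring

theorem stmt11 (u0b u0g u1b u1g : ℝ) (hb : u1b < u0b) (hg : u0g < u1g)
    (α : ℝ → ℝ)
    (hα : ∀ ρ, α ρ =
      (u0b * Real.exp (ρ * u0b) - u1b * Real.exp (ρ * u1b)) /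
        (Real.exp (ρ * u0b) - Real.exp (ρ * u1b)) -
      (u1g * Real.exp (ρ * u1g) - u0g * Real.exp (ρ * u0g)) /
        (Real.exp (ρ * u1g) - Real.exp (ρ * u0g))) :
    Tendsto α (nhdsWithin 0 (Set.Ioi 0))
        (nhds (((u0b - u0g) - (u1g - u1b)) / 2)) ∧
      Tendsto α atTop (nhds (u0b - u1g)) := by
  set x := u0b - u1b with hxdef
  set y := u1g - u0g with hydef
  have hx : 0 < x := by simp [hxdef]; linarith
  have hy : 0 < y := by simp [hydef]; linarith
  have key : ∀ ρ : ℝ, 0 < ρ → α ρ =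
      (u0b - u1g) + x / (Real.exp (ρ*x) - 1) - y / (Real.exp (ρ*y) - 1) := by
    intro ρ hρ
    rw [hα ρ, ratio_eq u0b u1b ρ hb hρ, ratio_eq u1g u0g ρ hg hρ]
    ring
  constructor
  · -- ρ → 0⁺
    have key0 : ∀ ρ : ℝ, 0 < ρ → α ρ =
        (u0b - u1g) + x * qq (ρ*x) - y * qq (ρ*y) := by
      intro ρ hρ
      rw [key ρ hρ, qq_eq x ρ hx hρ, qq_eq y ρ hy hρ]
      ring
    have hmapx : Tendsto (fun ρ : ℝ => ρ*x) (nhdsWithin 0 (Set.Ioi 0)) (nhdsWithin 0 (Set.Ioi 0)) := by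
      rw [tendsto_nhdsWithin_iff]
      constructor
      · have : Tendsto (fun ρ : ℝ => ρ*x) (nhds 0) (nhds (0*x)) :=
          (continuous_id.mul continuous_const).tendsto 0
        simpa using this.mono_left nhdsWithin_le_nhds
      · filter_upwards [self_mem_nhdsWithin] with ρ (hρ : ρ ∈ Set.Ioi 0)
        have hρ' : (0:ℝ) < ρ := hρ
        exact Set.mem_Ioi.2 (by positivity)
    have hmapy : Tendsto (fun ρ : ℝ => ρ*y) (nhdsWithin 0 (Set.Ioi 0)) (nhdsWithin 0 (Set.Ioi 0)) := by
      rw [tendsto_nhdsWithin_iff]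
      constructor
      · have : Tendsto (fun ρ : ℝ => ρ*y) (nhds 0) (nhds (0*y)) :=
          (continuous_id.mul continuous_const).tendsto 0
        simpa using this.mono_left nhdsWithin_le_nhds
      · filter_upwards [self_mem_nhdsWithin] with ρ (hρ : ρ ∈ Set.Ioi 0)
        have hρ' : (0:ℝ) < ρ := hρ
        exact Set.mem_Ioi.2 (by positivity)
    have h1 : Tendsto (fun ρ : ℝ => (u0b - u1g) + x * qq (ρ*x) - y * qq (ρ*y))
        (nhdsWithin 0 (Set.Ioi 0))
        (nhds ((u0b - u1g) + x * (-(1/2)) - y * (-(1/2)))) :=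
      (tendsto_const_nhds.add ((hQ.comp hmapx).const_mul x)).sub ((hQ.comp hmapy).const_mul y)
    have : ((u0b - u0g) - (u1g - u1b)) / 2 = (u0b - u1g) + x * (-(1/2)) - y * (-(1/2)) := by
      rw [hxdef, hydef]; ring
    rw [this]
    refine Tendsto.congr' ?_ h1
    filter_upwards [self_mem_nhdsWithin] with ρ (hρ : ρ ∈ Set.Ioi 0)
    exact (key0 ρ hρ).symm
  · -- ρ → ∞
    have hz : ∀ z : ℝ, 0 < z → Tendsto (fun ρ : ℝ => z / (Real.exp (ρ*z) - 1)) atTop (nhds 0) := by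
      intro z hz0
      have h1 : Tendsto (fun ρ : ℝ => ρ*z) atTop atTop :=
        Tendsto.atTop_mul_const hz0 tendsto_id
      have h2 : Tendsto (fun ρ : ℝ => Real.exp (ρ*z) - 1) atTop atTop :=
        tendsto_atTop_add_const_right _ (-1) (Real.tendsto_exp_atTop.comp h1) |>.congr (fun ρ => by simp [Function.comp, sub_eq_add_neg])
      have h3 : Tendsto (fun ρ : ℝ => (Real.exp (ρ*z) - 1)⁻¹) atTop (nhds 0) :=
        h2.inv_tendsto_atTop
      have := h3.const_mul z
      simpa [div_eq_mul_inv] using this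
    have h1 : Tendsto (fun ρ : ℝ => (u0b - u1g) + x / (Real.exp (ρ*x) - 1) - y / (Real.exp (ρ*y) - 1))
        atTop (nhds ((u0b - u1g) + 0 - 0)) :=
      (tendsto_const_nhds.add (hz x hx)).sub (hz y hy)
    rw [show u0b - u1g = (u0b - u1g) + 0 - 0 by ring]
    refine Tendsto.congr' ?_ h1
    filter_upwards [eventually_gt_atTop 0] with ρ hρ
    exact (key ρ hρ).symm
end

section
/- Let β ∈ (0,1) and ρ > 0. Define for μ ∈ [0,1] the functions η₊(μ) = μe^{ρβ}/(μe^{ρβ} + 1 − μ) and η₋(μ) = μ/(μ + (1−μ)e^{ρβ}). Then the function g(μ) = η₊(μ) − η₋(μ) attains its unique maximum on [0,1] at μ = 1/2. -/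
/-!
Writing `k = exp (ρ β) > 1` and `p = μ (1 - μ)`, a common denominator gives
`η₊ μ - η₋ μ = (k² - 1) p / (k + (k - 1)² p)`, a strictly increasing function of `p ≥ 0`.
So the polarization is maximal exactly where `μ (1 - μ)` is, namely only at `μ = 1 / 2`.
-/

open Real Set

noncomputable def polarization (k μ : ℝ) : ℝ :=
  μ * k / (μ * k + 1 - μ) - μ / (μ + (1 - μ) * k)

lemma polarization_eq {k μ : ℝ} (h₁ : μ * k + 1 - μ ≠ 0) (h₂ : μ + (1 - μ) * k ≠ 0) :
    polarization k μ = (k ^ 2 - 1) * (μ * (1 - μ)) / (k + (k - 1) ^ 2 * (μ * (1 - μ))) := by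
  have hden : k + (k - 1) ^ 2 * (μ * (1 - μ)) = (μ * k + 1 - μ) * (μ + (1 - μ) * k) := by ring
  rw [polarization, hden, div_sub_div _ _ h₁ h₂]
  ring_nf

lemma polarization_eq_of_mem_Icc {k μ : ℝ} (hk : 0 < k) (hμ : μ ∈ Icc 0 1) :
    polarization k μ = (k ^ 2 - 1) * (μ * (1 - μ)) / (k + (k - 1) ^ 2 * (μ * (1 - μ))) := by
  obtain ⟨h₀, h₁⟩ := hμ
  have hk' := mul_nonneg (sub_nonneg.mpr h₁) hk.le
  exact polarization_eq (by nlinarith [mul_nonneg h₀ hk.le]) (by nlinarith)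

lemma strictMonoOn_mul_div_add_mul {k : ℝ} (hk : 1 < k) :
    StrictMonoOn (fun p ↦ (k ^ 2 - 1) * p / (k + (k - 1) ^ 2 * p)) (Ici 0) := by
  intro p hp q hq hpq
  have hk' : 0 < (k ^ 2 - 1) * k := mul_pos (by nlinarith) (by linarith)
  have hp : (0 : ℝ) ≤ p := hp
  have hq : (0 : ℝ) ≤ q := hq
  have hk₀ : 0 < k := by linarith
  dsimp only
  rw [div_lt_div_iff₀ (by positivity) (by positivity)]
  nlinarith [mul_lt_mul_of_pos_left hpq hk']

lemma mul_one_sub_le_quarter (μ : ℝ) : μ * (1 - μ) ≤ 1 / 2 * (1 - 1 / 2) := by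
  nlinarith [sq_nonneg (μ - 1 / 2)]

lemma eq_half_of_mul_one_sub_eq_quarter {μ : ℝ} (h : μ * (1 - μ) = 1 / 2 * (1 - 1 / 2)) :
    μ = 1 / 2 := by
  have hsq : (μ - 1 / 2) ^ 2 = 0 := by linarith
  linarith [pow_eq_zero_iff (n := 2) two_ne_zero |>.mp hsq]

theorem stmt14 (β ρ : ℝ) (hβ : β ∈ Set.Ioo (0 : ℝ) 1) (hρ : 0 < ρ)
    (g : ℝ → ℝ)
    (hg : ∀ μ, g μ =
      μ * Real.exp (ρ * β) / (μ * Real.exp (ρ * β) + 1 - μ) -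
        μ / (μ + (1 - μ) * Real.exp (ρ * β))) :
    (∀ μ ∈ Set.Icc (0 : ℝ) 1, g μ ≤ g (1 / 2)) ∧
      (∀ μ ∈ Set.Icc (0 : ℝ) 1, g μ = g (1 / 2) → μ = 1 / 2) := by
  have hk : 1 < exp (ρ * β) := one_lt_exp_iff.mpr (mul_pos hρ hβ.1)
  have hg' : ∀ μ ∈ Icc (0 : ℝ) 1, g μ = (exp (ρ * β) ^ 2 - 1) * (μ * (1 - μ)) /
      (exp (ρ * β) + (exp (ρ * β) - 1) ^ 2 * (μ * (1 - μ))) := fun μ hμ ↦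
    (hg μ).trans (polarization_eq_of_mem_Icc (exp_pos _) hμ)
  have hhalf : (1 / 2 : ℝ) ∈ Icc 0 1 := by norm_num
  have hvar : ∀ μ ∈ Icc (0 : ℝ) 1, μ * (1 - μ) ∈ Ici 0 := fun μ ⟨h₀, h₁⟩ ↦
    mul_nonneg h₀ (sub_nonneg.mpr h₁)
  have hmono := strictMonoOn_mul_div_add_mul hk
  refine ⟨fun μ hμ ↦ ?_, fun μ hμ heq ↦ ?_⟩
  · rw [hg' μ hμ, hg' _ hhalf]
    exact hmono.monotoneOn (hvar μ hμ) (hvar _ hhalf) (mul_one_sub_le_quarter μ)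
  · rw [hg' μ hμ, hg' _ hhalf] at heq
    exact eq_half_of_mul_one_sub_eq_quarter (hmono.injOn (hvar μ hμ) (hvar _ hhalf) heq)
end

section
/- Let F be a CDF on [θ̲, θ̄] with continuous strictly positive density f, with θ̲ < 0 < θ̄, ρ > 0, and assume ∫ e^{ρθ}dF < 1 (hence ∫θ dF < 0). Let θ^W ∈ (θ̲, θ̄) be the unique solution of (1/(1−F(θ^W)))∫_{θ^W}^{θ̄} e^{ρθ}f(θ)dθ = 1 and θ^B ∈ (θ̲, θ̄) the unique solution of (1/(1−F(θ^B)))∫_{θ^B}^{θ̄} θ f(θ)dθ = 0. Then θ^W < θ^B. -/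
open Real intervalIntegral

theorem stmt18 (θl θu ρ : ℝ) (hl : θl < 0) (hu : 0 < θu) (hρ : 0 < ρ)
    (f : ℝ → ℝ) (hf : ContinuousOn f (Set.Icc θl θu))
    (hfpos : ∀ x ∈ Set.Icc θl θu, 0 < f x)
    (F : ℝ → ℝ) (hF : ∀ z, F z = ∫ t in θl..z, f t) (hF1 : F θu = 1)
    (hx : (∫ t in θl..θu, Real.exp (ρ * t) * f t) < 1)
    (θW θB : ℝ) (hθW : θW ∈ Set.Ioo θl θu) (hθB : θB ∈ Set.Ioo θl θu)
    (hWeq : (1 / (1 - F θW)) * ∫ t in θW..θu, Real.exp (ρ * t) * f t = 1)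
    (hBeq : (1 / (1 - F θB)) * ∫ t in θB..θu, t * f t = 0) :
    θW < θB := by
  obtain ⟨hWl, hWu⟩ := hθW
  obtain ⟨hBl, hBu⟩ := hθB
  -- integrability of g * f on subintervals
  have hgint : ∀ (g : ℝ → ℝ), Continuous g → ∀ a b : ℝ, a ∈ Set.Icc θl θu →
      b ∈ Set.Icc θl θu → IntervalIntegrable (fun t => g t * f t) MeasureTheory.volume a b := by
    intro g hg a b ha hb
    exact ((hg.continuousOn.mul hf).mono (Set.uIcc_subset_Icc ha hb)).intervalIntegrable
  have hfint : ∀ a b : ℝ, a ∈ Set.Icc θl θu → b ∈ Set.Icc θl θu →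
      IntervalIntegrable f MeasureTheory.volume a b := by
    intro a b ha hb
    exact (hf.mono (Set.uIcc_subset_Icc ha hb)).intervalIntegrable
  have hWmem : θW ∈ Set.Icc θl θu := ⟨hWl.le, hWu.le⟩
  have hBmem : θB ∈ Set.Icc θl θu := ⟨hBl.le, hBu.le⟩
  have hlmem : θl ∈ Set.Icc θl θu := ⟨le_rfl, (hl.trans hu).le⟩
  have humem : θu ∈ Set.Icc θl θu := ⟨(hl.trans hu).le, le_rfl⟩
  -- 1 - F z = ∫ t in z..θu, f t
  have hFz : ∀ z ∈ Set.Icc θl θu, 1 - F z = ∫ t in z..θu, f t := by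
    intro z hz
    rw [← hF1, hF, hF]
    exact integral_interval_sub_left (hfint θl θu hlmem humem) (hfint θl z hlmem hz)
  -- 1 - F positive
  have hFpos : ∀ z ∈ Set.Icc θl θu, z < θu → 0 < 1 - F z := by
    intro z hz hzu
    rw [hFz z hz]
    exact intervalIntegral_pos_of_pos_on (hfint z θu hz humem)
      (fun x hx => hfpos x ⟨hz.1.trans hx.1.le, hx.2.le⟩) hzu
  have hFW := hFpos θW hWmem hWu
  have hFB := hFpos θB hBmem hBu
  -- from hWeq : ∫ exp(ρ t) f = 1 - F θW = ∫ f
  have hW : (∫ t in θW..θu, Real.exp (ρ * t) * f t) = ∫ t in θW..θu, f t := by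
    rw [← hFz θW hWmem]
    field_simp at hWeq
    linarith [hWeq]
  -- from hBeq : ∫ t f = 0
  have hB : (∫ t in θB..θu, t * f t) = 0 := by
    rcases mul_eq_zero.1 hBeq with h | h
    · exact absurd h (by positivity)
    · exact h
  -- key positivity : ∫ (exp(ρ t) - 1 - ρ t) * f t > 0
  have hkey : 0 < ∫ t in θW..θu, (Real.exp (ρ * t) - 1 - ρ * t) * f t := by
    apply integral_pos hWu
    · exact ((((Real.continuous_exp.comp (continuous_const.mul continuous_id)).sub
        continuous_const).sub (continuous_const.mul continuous_id)).continuousOn.mul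
        (hf.mono (Set.Icc_subset_Icc hWl.le le_rfl)))
    · intro x hx
      have h1 : 0 ≤ Real.exp (ρ * x) - 1 - ρ * x := by
        have := Real.add_one_le_exp (ρ * x)
        linarith
      have h2 : 0 < f x := hfpos x ⟨hWl.le.trans hx.1.le, hx.2⟩
      positivity
    · refine ⟨θu, ⟨hWu.le, le_rfl⟩, ?_⟩
      have h1 : 0 < Real.exp (ρ * θu) - 1 - ρ * θu := by
        have := Real.add_one_lt_exp (x := ρ * θu) (by positivity)
        linarith
      exact mul_pos h1 (hfpos θu humem)
  -- hence ∫ t f < 0 on [θW, θu]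
  have iexp : IntervalIntegrable (fun t => Real.exp (ρ * t) * f t) MeasureTheory.volume θW θu :=
    hgint _ (Real.continuous_exp.comp (continuous_const.mul continuous_id)) _ _ hWmem humem
  have iid : IntervalIntegrable (fun t => t * f t) MeasureTheory.volume θW θu :=
    hgint _ continuous_id _ _ hWmem humem
  have if' : IntervalIntegrable f MeasureTheory.volume θW θu := hfint _ _ hWmem humem
  -- hence ∫ t f < 0 on [θW, θu]
  have hWneg : (∫ t in θW..θu, t * f t) < 0 := by
    have e0 : ∀ t : ℝ, (Real.exp (ρ * t) - 1 - ρ * t) * f t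
        = Real.exp (ρ * t) * f t - f t - ρ * (t * f t) := fun t => by ring
    have e1 : (∫ t in θW..θu, (Real.exp (ρ * t) - 1 - ρ * t) * f t)
        = (∫ t in θW..θu, Real.exp (ρ * t) * f t) - (∫ t in θW..θu, f t)
          - ρ * ∫ t in θW..θu, t * f t := by
      simp only [e0]
      rw [intervalIntegral.integral_sub (iexp.sub if') (iid.const_mul ρ),
        intervalIntegral.integral_sub iexp if', intervalIntegral.integral_const_mul]
    rw [e1, hW] at hkey
    nlinarith
  -- θW < 0
  have hW0 : θW < 0 := by
    by_contra h
    push_neg at h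
    have : 0 ≤ ∫ t in θW..θu, t * f t :=
      integral_nonneg hWu.le (fun u hu' =>
        mul_nonneg (h.trans hu'.1) (hfpos u ⟨hWl.le.trans hu'.1, hu'.2⟩).le)
    linarith
  -- conclude
  by_contra hc
  push_neg at hc
  have hsplit : (∫ t in θB..θW, t * f t) + (∫ t in θW..θu, t * f t)
      = ∫ t in θB..θu, t * f t :=
    integral_add_adjacent_intervals (hgint _ continuous_id _ _ hBmem hWmem)
      (hgint _ continuous_id _ _ hWmem humem)
  have hnp : (∫ t in θB..θW, t * f t) ≤ 0 := by
    have h := integral_nonneg (μ := MeasureTheory.volume) (f := fun t => -(t * f t)) hc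
      (fun u hu' => by
        have hu0 : u ≤ 0 := hu'.2.trans hW0.le
        have := mul_nonpos_of_nonpos_of_nonneg hu0
          (hfpos u ⟨hBl.le.trans hu'.1, hu'.2.trans hWu.le⟩).le
        exact neg_nonneg.mpr this)
    rw [intervalIntegral.integral_neg] at h
    linarith
  rw [hB] at hsplit
  linarith
end

section
/- Let c, ς, α, θ̲, θ̄, ρ be reals with 0 < θ̲ < θ̄ < 1, ς > 0, 0 ≤ α ≤ 1, ρ > 0 and ςαθ̲ < c < ςαθ̄. Define μ^B = (c − αθ̲ς)/(α(θ̄ − θ̲)ς) and μ^W = (e^{−ρθ̲ς} − e^{ρ(−(1−α)θ̲ς − c)}) / (e^{−ρςθ̲} − e^{ρ(−(1−α)θ̲ς − c)} + e^{ρ(−(1−α)θ̄ς − c)} − e^{−ρθ̄ς}). Then μ^W > μ^B whenever α ∈ [0,1) or α = 1 (with ρ > 0 arbitrary), i.e., in the preventive-health model the wishful adoption threshold strictly exceeds the Bayesian threshold. -/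
open Real

set_option maxHeartbeats 1000000 in
theorem stmt19 (c ς α θl θu ρ : ℝ)
    (hθl : 0 < θl) (hθ : θl < θu) (hθu : θu < 1)
    (hς : 0 < ς) (hα0 : 0 ≤ α) (hα1 : α ≤ 1) (hρ : 0 < ρ)
    (hc1 : ς * α * θl < c) (hc2 : c < ς * α * θu) :
    (c - α * θl * ς) / (α * (θu - θl) * ς) <
      (Real.exp (-ρ * θl * ς) - Real.exp (ρ * (-(1 - α) * θl * ς - c))) /
        (Real.exp (-ρ * ς * θl) - Real.exp (ρ * (-(1 - α) * θl * ς - c)) +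
          (Real.exp (ρ * (-(1 - α) * θu * ς - c)) - Real.exp (-ρ * θu * ς))) := by
  have hαpos : 0 < α := by
    by_contra h
    push_neg at h
    nlinarith [mul_nonneg (neg_nonneg.mpr h) (mul_pos hς (sub_pos.mpr hθ)).le]
  have hp : 0 < c - α * θl * ς := by nlinarith
  have hq : 0 < α * θu * ς - c := by nlinarith
  set p := c - α * θl * ς with hpdef
  set q := α * θu * ς - c with hqdef
  set s := -(1 - α) * θl * ς - c with hsdef
  set ε := (1 - α) * (θu - θl) * ς with hεdef
  have hε : 0 ≤ ε := by
    have : 0 ≤ (1 - α) := by linarith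
    have : 0 ≤ (1 - α) * (θu - θl) := by nlinarith
    nlinarith
  set E := Real.exp (ρ * s) with hEdef
  set P := Real.exp (ρ * p) with hPdef
  set F := Real.exp (-(ρ * ε)) with hFdef
  set Q := Real.exp (-(ρ * q)) with hQdef
  have hE : 0 < E := Real.exp_pos _
  have hPQ : 0 < Q := Real.exp_pos _
  have hPp : 0 < P := Real.exp_pos _
  have hFp : 0 < F := Real.exp_pos _
  have hF1 : F ≤ 1 := Real.exp_le_one_iff.mpr (by nlinarith [mul_nonneg hρ.le hε])
  have hPgt : ρ * p + 1 < P := Real.add_one_lt_exp (mul_pos hρ hp).ne'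
  have hQgt : -(ρ * q) + 1 < Q := Real.add_one_lt_exp (neg_lt_zero.mpr (mul_pos hρ hq)).ne
  -- rewrite all exponentials
  have e1 : Real.exp (-ρ * θl * ς) = E * P := by
    rw [hEdef, hPdef, ← Real.exp_add]; congr 1; rw [hsdef, hpdef]; ring
  have e2 : Real.exp (-ρ * ς * θl) = E * P := by
    rw [hEdef, hPdef, ← Real.exp_add]; congr 1; rw [hsdef, hpdef]; ring
  have e4 : Real.exp (ρ * (-(1 - α) * θu * ς - c)) = E * F := by
    rw [hEdef, hFdef, ← Real.exp_add]; congr 1; rw [hsdef, hεdef]; ring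
  have e5 : Real.exp (-ρ * θu * ς) = E * F * Q := by
    rw [hEdef, hFdef, hQdef, ← Real.exp_add, ← Real.exp_add]; congr 1
    rw [hsdef, hεdef, hqdef]; ring
  rw [e1, e2, e4, e5]
  have hDeq : α * (θu - θl) * ς = p + q := by rw [hpdef, hqdef]; ring
  have hD : 0 < α * (θu - θl) * ς := mul_pos (mul_pos hαpos (sub_pos.mpr hθ)) hς
  have hQ1 : Q < 1 := by
    rw [hQdef]; exact Real.exp_lt_one_iff.mpr (by nlinarith [mul_pos hρ hq])
  clear_value p q s ε E P F Q
  clear hpdef hqdef hsdef hεdef hEdef hPdef hFdef hQdef e1 e2 e4 e5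
  have hP1 : 1 < P := by nlinarith [mul_pos hρ hp]
  have hA : 0 < E * P - E := by nlinarith [mul_pos hE (sub_pos.mpr hP1)]
  have hB : 0 < E * F - E * F * Q := by
    nlinarith [mul_pos (mul_pos hE hFp) (sub_pos.mpr hQ1)]
  rw [div_lt_div_iff₀ hD (by linarith), hDeq]
  have key : p * (E * F * (1 - Q)) < q * (E * (P - 1)) := by
    have h1 : p * (E * F * (1 - Q)) ≤ p * (E * (1 - Q)) := by
      nlinarith [mul_nonneg (mul_nonneg (mul_nonneg hp.le hE.le)
        (sub_nonneg.mpr hQ1.le)) (sub_nonneg.mpr hF1)]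
    have h2 : p * (E * (1 - Q)) < p * (E * (ρ * q)) := by
      nlinarith [mul_pos (mul_pos hp hE) (show 0 < ρ * q - (1 - Q) by linarith)]
    have h4 : q * (E * (ρ * p)) < q * (E * (P - 1)) := by
      nlinarith [mul_pos (mul_pos hq hE) (show 0 < (P - 1) - ρ * p by linarith)]
    have h3 : p * (E * (ρ * q)) = q * (E * (ρ * p)) := by ring
    linarith [h1, h2, h4, h3.le, h3.ge]
  nlinarith [key]
end
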